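/- arXiv:2007.16139 — 2 statements merged into one kernel-verified Lean document; each statement's English description precedes it below -/
import Mathlib

section
/- Let Λ < 0, M > 0, Q ≠ 0, P(r) = -Λr⁴ + r² - 2Mr + Q², s the unique root of P', and z > 0 the positive root of T(r) = 3Λr⁴ - r² + Q². Then P has exactly two simple real roots if and only if P'(z) < 0, which is equivalent to M > z - 2Λz³; moreover both roots are positive when they exist. -/
/-!
The derivative `P'` is strictly increasing, and its unique zero `s` is positive because
`P'(0) = -2M < 0`; so `P` decreases strictly up to `s` and increases strictly after it, and
has exactly two roots, both simple, precisely when `P(s) < 0`. Since `P(r) = r P'(r) + T(r)`,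
we get `P(s) = T(s)`, and as `T` decreases strictly on `[0, ∞)` with zero `z`,
`P(s) < 0 ↔ z < s ↔ P'(z) < 0`. For `r ≤ 0` every term of `P` is nonnegative and `Q² > 0`,
so roots are positive.
-/

open Set

def IsStrictValley {α β : Type*} [Preorder α] [Preorder β] (f : α → β) (s : α) : Prop :=
  StrictAntiOn f (Iic s) ∧ StrictMonoOn f (Ici s)

namespace IsStrictValley

variable {α β : Type*} [LinearOrder α] [Preorder β] {f : α → β} {s r : α}

theorem apply_lt_apply (h : IsStrictValley f s) (hr : r ≠ s) : f s < f r := by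
  rcases hr.lt_or_gt with hr | hr
  · exact h.1 hr.le le_rfl hr
  · exact h.2 le_rfl hr.le hr

theorem eq_of_apply_le (h : IsStrictValley f s) (hr : f r ≤ f s) : r = s :=
  by_contra fun hne => (h.apply_lt_apply hne).not_ge hr

end IsStrictValley

theorem IsStrictValley.exists_two_roots {f : ℝ → ℝ} {s a b : ℝ} (h : IsStrictValley f s)
    (hf : Continuous f) (hs : f s < 0) (ha : a ≤ s) (hfa : 0 ≤ f a) (hb : s ≤ b) (hfb : 0 ≤ f b) :
    ∃ r₁ r₂, r₁ < s ∧ s < r₂ ∧ f r₁ = 0 ∧ f r₂ = 0 ∧ ∀ r, f r = 0 → r = r₁ ∨ r = r₂ := by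
  obtain ⟨r₁, hr₁, hfr₁⟩ := intermediate_value_Icc' ha hf.continuousOn ⟨hs.le, hfa⟩
  obtain ⟨r₂, hr₂, hfr₂⟩ := intermediate_value_Icc hb hf.continuousOn ⟨hs.le, hfb⟩
  have hr₁s : r₁ < s := hr₁.2.lt_of_ne fun he => by rw [he] at hfr₁; linarith
  have hsr₂ : s < r₂ := hr₂.1.lt_of_ne fun he => by rw [← he] at hfr₂; linarith
  refine ⟨r₁, r₂, hr₁s, hsr₂, hfr₁, hfr₂, fun r hr => ?_⟩
  rcases le_total r s with hrs | hsr
  · exact .inl <| h.1.injOn hrs hr₁.2 (hr.trans hfr₁.symm)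
  · exact .inr <| h.2.injOn hsr hr₂.1 (hr.trans hfr₂.symm)

theorem isStrictValley_of_hasDerivAt {f f' : ℝ → ℝ} {s : ℝ} (hf : ∀ x, HasDerivAt f (f' x) x)
    (hf' : StrictMono f') (hs : f' s = 0) : IsStrictValley f s := by
  have hcont : Continuous f := continuous_iff_continuousAt.2 fun x => (hf x).continuousAt
  refine ⟨strictAntiOn_of_deriv_neg (convex_Iic s) hcont.continuousOn fun x hx => ?_,
    strictMonoOn_of_deriv_pos (convex_Ici s) hcont.continuousOn fun x hx => ?_⟩
  · rw [interior_Iic] at hx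
    rw [(hf x).deriv, ← hs]
    exact hf' hx
  · rw [interior_Ici] at hx
    rw [(hf x).deriv, ← hs]
    exact hf' hx

namespace Horizon

variable (Λ M Q : ℝ)

def P (r : ℝ) : ℝ := -Λ * r ^ 4 + r ^ 2 - 2 * M * r + Q ^ 2

def dP (r : ℝ) : ℝ := -4 * Λ * r ^ 3 + 2 * r - 2 * M

def T (r : ℝ) : ℝ := 3 * Λ * r ^ 4 - r ^ 2 + Q ^ 2

theorem hasDerivAt_P (r : ℝ) : HasDerivAt (P Λ M Q) (dP Λ M r) r := by
  have h := ((((hasDerivAt_pow 4 r).const_mul (-Λ)).add (hasDerivAt_pow 2 r)).sub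
    ((hasDerivAt_id r).const_mul (2 * M))).add_const (Q ^ 2)
  exact h.congr_deriv (by simp only [dP]; norm_num; ring)

theorem continuous_P : Continuous (P Λ M Q) :=
  continuous_iff_continuousAt.2 fun r => (hasDerivAt_P Λ M Q r).continuousAt

theorem P_eq_mul_dP_add_T (r : ℝ) : P Λ M Q r = r * dP Λ M r + T Λ Q r := by
  simp only [P, dP, T]
  ring

variable {Λ M Q}

theorem strictMono_dP (hΛ : Λ < 0) : StrictMono (dP Λ M) := by
  intro a b hab
  have hcube : a ^ 3 < b ^ 3 := Odd.strictMono_pow (by decide) hab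
  simp only [dP]
  nlinarith

theorem exists_dP_eq_zero (hΛ : Λ < 0) : ∃ s, dP Λ M s = 0 := by
  set R := |M| + 1
  have hR : 0 < R := by positivity
  have hMR : |M| < R := lt_add_one _
  have hR3 : 0 < R ^ 3 := by positivity
  have hneg : dP Λ M (-R) ≤ 0 := by
    simp only [dP]
    nlinarith [neg_abs_le M]
  have hpos : 0 ≤ dP Λ M R := by
    simp only [dP]
    nlinarith [le_abs_self M]
  have hcont : Continuous (dP Λ M) := by unfold dP; fun_prop
  obtain ⟨s, -, hs⟩ := intermediate_value_Icc (by linarith) hcont.continuousOn ⟨hneg, hpos⟩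
  exact ⟨s, hs⟩

theorem pos_of_dP_eq_zero (hΛ : Λ < 0) (hM : 0 < M) {s : ℝ} (hs : dP Λ M s = 0) : 0 < s :=
  (strictMono_dP hΛ).lt_iff_lt.1 <| by rw [hs]; simp only [dP]; linarith

theorem strictAntiOn_T (hΛ : Λ ≤ 0) : StrictAntiOn (T Λ Q) (Ici 0) := by
  intro a ha b hb hab
  have h4 : a ^ 4 ≤ b ^ 4 := pow_le_pow_left₀ ha hab.le 4
  have h2 : a ^ 2 < b ^ 2 := pow_lt_pow_left₀ hab ha two_ne_zero
  simp only [T]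
  nlinarith

theorem dP_neg_iff_P_neg (hΛ : Λ < 0) (hM : 0 < M) {s z : ℝ} (hz0 : 0 ≤ z) (hz : T Λ Q z = 0)
    (hs : dP Λ M s = 0) : dP Λ M z < 0 ↔ P Λ M Q s < 0 := by
  have hs0 := pos_of_dP_eq_zero hΛ hM hs
  have hT : T Λ Q s < 0 ↔ z < s := by
    rw [← hz]
    exact (strictAntiOn_T hΛ.le).lt_iff_gt hs0.le hz0
  have hdP : dP Λ M z < 0 ↔ z < s := by
    rw [← hs]
    exact (strictMono_dP hΛ).lt_iff_lt
  rw [P_eq_mul_dP_add_T, hs, mul_zero, zero_add, hT, hdP]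

theorem P_pos_of_nonpos (hΛ : Λ ≤ 0) (hM : 0 ≤ M) (hQ : Q ≠ 0) {r : ℝ} (hr : r ≤ 0) :
    0 < P Λ M Q r := by
  have hQ2 : 0 < Q ^ 2 := by positivity
  simp only [P]
  nlinarith [pow_nonneg (neg_nonneg.2 hr) 4, mul_nonneg hM (neg_nonneg.2 hr)]

theorem P_nonneg_of_two_mul_le (hΛ : Λ ≤ 0) {r : ℝ} (hr : 0 ≤ r) (hMr : 2 * M ≤ r) :
    0 ≤ P Λ M Q r := by
  simp only [P]
  nlinarith [pow_nonneg hr 4, mul_nonneg hr (sub_nonneg.2 hMr), sq_nonneg Q]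

end Horizon

/-- For `Λ < 0`, `M > 0`, `Q ≠ 0`: `P` has exactly two simple real roots iff `P'(z) < 0`
iff `M > z - 2Λz³`, where `z > 0` is the positive root of `T`; moreover any root of `P`
is positive. -/
theorem stmt_7 (Λ M Q z : ℝ) (hΛ : Λ < 0) (hM : 0 < M) (hQ : Q ≠ 0)
    (hz : 0 < z) (hzroot : 3 * Λ * z ^ 4 - z ^ 2 + Q ^ 2 = 0)
    (P : ℝ → ℝ) (hP : ∀ r, P r = -Λ * r ^ 4 + r ^ 2 - 2 * M * r + Q ^ 2) :
    ((∃ r₁ r₂ : ℝ, r₁ ≠ r₂ ∧ P r₁ = 0 ∧ P r₂ = 0 ∧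
        (-4 * Λ * r₁ ^ 3 + 2 * r₁ - 2 * M ≠ 0) ∧ (-4 * Λ * r₂ ^ 3 + 2 * r₂ - 2 * M ≠ 0) ∧
        ∀ r : ℝ, P r = 0 → r = r₁ ∨ r = r₂) ↔
      -4 * Λ * z ^ 3 + 2 * z - 2 * M < 0) ∧
    ((-4 * Λ * z ^ 3 + 2 * z - 2 * M < 0) ↔ M > z - 2 * Λ * z ^ 3) ∧
    (∀ r : ℝ, P r = 0 → 0 < r) := by
  obtain rfl : P = Horizon.P Λ M Q := funext hP
  obtain ⟨s, hs⟩ := Horizon.exists_dP_eq_zero (M := M) hΛ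
  have hs0 := Horizon.pos_of_dP_eq_zero hΛ hM hs
  have hmono := Horizon.strictMono_dP (M := M) hΛ
  have hvalley := isStrictValley_of_hasDerivAt (Horizon.hasDerivAt_P Λ M Q) hmono hs
  have hcrit : Horizon.dP Λ M z < 0 ↔ Horizon.P Λ M Q s < 0 :=
    Horizon.dP_neg_iff_P_neg hΛ hM hz.le hzroot hs
  have hP_pos := fun r => Horizon.P_pos_of_nonpos (r := r) hΛ.le hM.le hQ
  refine ⟨⟨?_, fun hdPz => ?_⟩, ⟨fun h => by linarith, fun h => by linarith⟩,
    fun r hr => lt_of_not_ge fun hr0 => (hP_pos r hr0).ne' hr⟩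
  · rintro ⟨r₁, r₂, hne, h₁, h₂, -⟩
    refine hcrit.2 <| lt_of_not_ge fun hPs => hne ?_
    exact (hvalley.eq_of_apply_le (h₁ ▸ hPs)).trans (hvalley.eq_of_apply_le (h₂ ▸ hPs)).symm
  · have hPb := Horizon.P_nonneg_of_two_mul_le (Q := Q) hΛ.le
      (hs0.le.trans (le_max_left s (2 * M))) (le_max_right _ _)
    obtain ⟨r₁, r₂, hr₁, hr₂, h₁, h₂, hroots⟩ := hvalley.exists_two_roots
      (Horizon.continuous_P Λ M Q) (hcrit.1 hdPz) hs0.le (hP_pos 0 le_rfl).le (le_max_left _ _) hPb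
    exact ⟨r₁, r₂, (hr₁.trans hr₂).ne, h₁, h₂, ((hmono hr₁).trans_eq hs).ne,
      (hs.symm.trans_lt (hmono hr₂)).ne', hroots⟩
end

section
/- Let H be a Hilbert space, let U(t,s) be a family of unitary operators on H satisfying U(t₃,t₂)U(t₂,t₁) = U(t₃,t₁) and U(t,t) = Id, and let (H₀, dom) be a self-adjoint operator on H with unitary group e^{itH₀}. Suppose D ⊆ H is a dense subspace such that for every ψ ∈ D the map t ↦ U(0,t)e^{itH₀}ψ is differentiable with ‖d/dt (U(0,t)e^{itH₀}ψ)‖ ≤ C_ψ e^{-κt} for some κ > 0, C_ψ ≥ 0 and all t ≥ 0. Then the strong limit W = s-lim_{t→+∞} U(0,t)e^{itH₀} exists on all of H and W is an isometry. -/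
/-!
Cook's method. For `ψ` in the dense set `D`, the derivative of `t ↦ U(0,t) V(t) ψ` is
dominated by `C e^{-κt}`, hence integrable on `[0, ∞)`, so the trajectory converges. The maps
`U(0,t) V(t)` are isometries, hence equi-Lipschitz, so convergence passes from `D` to all of `H`
by an `ε/3` argument, and the pointwise limit of linear isometries is a linear isometry.
-/

open Filter MeasureTheory Topology

theorem tendsto_limUnder_of_hasDerivAt_of_norm_le_exp {E : Type*} [NormedAddCommGroup E]
    [NormedSpace ℝ E] [CompleteSpace E] {f g : ℝ → E} {a C κ : ℝ} (hκ : 0 < κ)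
    (hf : ∀ t, HasDerivAt f (g t) t) (hg : ∀ t ≥ a, ‖g t‖ ≤ C * Real.exp (-κ * t)) :
    Tendsto f atTop (𝓝 (limUnder atTop f)) := by
  have hg_meas : AEStronglyMeasurable g (volume.restrict (Set.Ioi a)) := by
    rw [show g = deriv f from funext fun t => (hf t).deriv.symm]
    exact (stronglyMeasurable_deriv f).aestronglyMeasurable
  have hg_int : IntegrableOn g (Set.Ioi a) :=
    ((exp_neg_integrableOn_Ioi a hκ).const_mul C).mono' hg_meas
      ((ae_restrict_iff' measurableSet_Ioi).2 (.of_forall fun t ht => hg t (le_of_lt ht)))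
  exact tendsto_limUnder_of_hasDerivAt_of_integrableOn_Ioi (fun t _ => hf t) hg_int

theorem cauchySeq_of_lipschitzWith_of_dense {ι X Y : Type*} [Nonempty ι] [SemilatticeSup ι]
    [PseudoMetricSpace X] [PseudoMetricSpace Y] {F : ι → X → Y} {K : NNReal}
    (hF : ∀ i, LipschitzWith K (F i)) {D : Set X} (hD : Dense D)
    (hFD : ∀ y ∈ D, CauchySeq (F · y)) (x : X) : CauchySeq (F · x) := by
  rw [Metric.cauchySeq_iff']
  intro ε hε
  obtain ⟨y, hyD, hxy⟩ := hD.exists_dist_lt x (show 0 < ε / 3 / (K + 1) by positivity)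
  have hKxy : K * dist x y < ε / 3 := by
    rw [lt_div_iff₀ (by positivity)] at hxy
    nlinarith [dist_nonneg (x := x) (y := y)]
  have hclose : ∀ i, dist (F i x) (F i y) < ε / 3 := fun i =>
    ((hF i).dist_le_mul x y).trans_lt hKxy
  obtain ⟨N, hN⟩ := Metric.cauchySeq_iff'.1 (hFD y hyD) (ε / 3) (by positivity)
  refine ⟨N, fun n hn => ?_⟩
  calc dist (F n x) (F N x)
      ≤ dist (F n x) (F n y) + dist (F N x) (F N y) + dist (F n y) (F N y) :=
        dist_triangle4_right _ _ _ _
    _ < ε / 3 + ε / 3 + ε / 3 := by gcongr; exacts [hclose n, hclose N, hN n hn]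
    _ = ε := by ring

def LinearIsometry.ofTendsto {𝕜 E F α : Type*} [NontriviallyNormedField 𝕜]
    [SeminormedAddCommGroup E] [NormedAddCommGroup F] [NormedSpace 𝕜 E] [NormedSpace 𝕜 F]
    {l : Filter α} [l.NeBot] (T : α → E →ₗᵢ[𝕜] F) {f : E → F}
    (h : Tendsto (fun a x => T a x) l (𝓝 f)) : E →ₗᵢ[𝕜] F where
  toLinearMap := linearMapOfTendsto f (fun a => (T a).toLinearMap) h
  norm_map' x := by
    have hx : Tendsto (fun a => ‖T a x‖) l (𝓝 ‖f x‖) := (tendsto_pi_nhds.1 h x).norm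
    simp only [LinearIsometry.norm_map, tendsto_const_nhds_iff] at hx
    exact hx.symm

theorem stmt_9_general {H : Type*} [NormedAddCommGroup H] [InnerProductSpace ℂ H] [CompleteSpace H]
    (U : ℝ → ℝ → (H ≃ₗᵢ[ℂ] H)) (V : ℝ → (H ≃ₗᵢ[ℂ] H))
    (D : Set H) (hD : Dense D)
    (hCook : ∀ ψ ∈ D, ∃ (g : ℝ → H) (C κ : ℝ), 0 < κ ∧ 0 ≤ C ∧
      (∀ t : ℝ, HasDerivAt (fun τ => U 0 τ (V τ ψ)) (g t) t) ∧
      (∀ t ≥ 0, ‖g t‖ ≤ C * Real.exp (-κ * t))) :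
    ∃ W : H →L[ℂ] H,
      (∀ ψ : H, Tendsto (fun t => U 0 t (V t ψ)) atTop (nhds (W ψ))) ∧
      (∀ ψ : H, ‖W ψ‖ = ‖ψ‖) := by
  let T : ℝ → H →ₗᵢ[ℂ] H := fun t => (U 0 t).toLinearIsometry.comp (V t).toLinearIsometry
  have hcauchy_D : ∀ ψ ∈ D, CauchySeq (T · ψ) := by
    intro ψ hψ
    obtain ⟨g, C, κ, hκ, -, hderiv, hbound⟩ := hCook ψ hψ
    exact (tendsto_limUnder_of_hasDerivAt_of_norm_le_exp hκ hderiv hbound).cauchySeq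
  have hlim : ∀ ψ, Tendsto (T · ψ) atTop (𝓝 (limUnder atTop (T · ψ))) := fun ψ =>
    tendsto_nhds_limUnder <| cauchySeq_tendsto_of_complete <|
      cauchySeq_of_lipschitzWith_of_dense (fun t => (T t).lipschitz) hD hcauchy_D ψ
  let W := LinearIsometry.ofTendsto T (tendsto_pi_nhds.2 hlim)
  exact ⟨W.toContinuousLinearMap, hlim, W.norm_map⟩

/-- Cook's method: if `t ↦ U(0,t) e^{itH₀} ψ` has an exponentially decaying derivative for
`ψ` in a dense set, then the wave operator `W = s-lim_{t→+∞} U(0,t) e^{itH₀}` exists on all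
of `H` and is an isometry. -/
theorem stmt_9 {H : Type*} [NormedAddCommGroup H] [InnerProductSpace ℂ H] [CompleteSpace H]
    (U : ℝ → ℝ → (H ≃ₗᵢ[ℂ] H)) (V : ℝ → (H ≃ₗᵢ[ℂ] H))
    (hUchap : ∀ t₁ t₂ t₃ : ℝ, ∀ ψ : H, U t₃ t₂ (U t₂ t₁ ψ) = U t₃ t₁ ψ)
    (hUid : ∀ t : ℝ, U t t = LinearIsometryEquiv.refl ℂ H)
    (hVgrp : ∀ s t : ℝ, ∀ ψ : H, V (s + t) ψ = V s (V t ψ))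
    (hVid : V 0 = LinearIsometryEquiv.refl ℂ H)
    (D : Set H) (hD : Dense D)
    (hCook : ∀ ψ ∈ D, ∃ (g : ℝ → H) (C κ : ℝ), 0 < κ ∧ 0 ≤ C ∧
      (∀ t : ℝ, HasDerivAt (fun τ => U 0 τ (V τ ψ)) (g t) t) ∧
      (∀ t ≥ 0, ‖g t‖ ≤ C * Real.exp (-κ * t))) :
    ∃ W : H →L[ℂ] H,
      (∀ ψ : H, Tendsto (fun t => U 0 t (V t ψ)) atTop (nhds (W ψ))) ∧
      (∀ ψ : H, ‖W ψ‖ = ‖ψ‖) :=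
  stmt_9_general U V D hD hCook
end
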